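/- Let X be a metrizable, second-countable topological space equipped with its Borel σ-algebra, and let μ be a σ-finite measure on X. Equip the set C(X, ℝ≥0) of continuous functions from X to the nonnegative reals with the σ-algebra generated by the sets {f | f(x) ≤ r} for x ∈ X and r ∈ ℝ≥0, and equip the space of measures on X with the σ-algebra generated by the evaluation maps ν ↦ ν(U) for measurable U. Then the map dist : C(X, ℝ≥0) → Measure(X) sending f to μ.withDensity(fun x => f x) is measurable. -/

import Mathlib

open MeasureTheory
open scoped NNReal ENNReal

def densitySigmaAlgebra (X : Type*) [TopologicalSpace X] :
    MeasurableSpace C(X, ℝ≥0) :=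
  MeasurableSpace.generateFrom
    {S | ∃ (x : X) (r : ℝ≥0), S = {f : C(X, ℝ≥0) | f x ≤ r}}

/- Each evaluation `f ↦ f x` is measurable and is continuous in `x`, which ranges over a separable
metrizable space; such a Carathéodory map is jointly measurable (approximate `x` by simple
functions). So `(f, x) ↦ f x` is measurable, and Tonelli makes every `∫_U f dμ` measurable in `f`. -/

theorem measurable_withDensity_of_measurable_uncurry {α β : Type*} [MeasurableSpace α]
    [MeasurableSpace β] (μ : Measure β) [SFinite μ] {g : α → β → ℝ≥0∞}
    (hg : Measurable (Function.uncurry g)) :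
    Measurable fun a => μ.withDensity (g a) := by
  refine Measure.measurable_of_measurable_coe _ fun s hs => ?_
  simp_rw [withDensity_apply _ hs]
  exact hg.lintegral_prod_right'

section DensitySigmaAlgebra

variable {X : Type*} [TopologicalSpace X]

attribute [local instance] densitySigmaAlgebra

theorem measurable_densitySigmaAlgebra_eval (x : X) :
    Measurable fun f : C(X, ℝ≥0) => f x :=
  measurable_of_Iic fun r => MeasurableSpace.measurableSet_generateFrom ⟨x, r, rfl⟩

theorem measurable_densitySigmaAlgebra_uncurry_eval [TopologicalSpace.MetrizableSpace X]
    [SecondCountableTopology X] [MeasurableSpace X] [OpensMeasurableSpace X] :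
    Measurable fun p : C(X, ℝ≥0) × X => p.1 p.2 :=
  (measurable_uncurry_of_continuous_of_measurable (u := fun (x : X) (f : C(X, ℝ≥0)) => f x)
    (fun f => f.continuous) measurable_densitySigmaAlgebra_eval).comp measurable_swap

end DensitySigmaAlgebra

/-- for a metrizable second-countable space `X` with its Borel σ-algebra
and a σ-finite measure `μ` on `X`, the map `dist : C(X, ℝ≥0) → Measure X`,
`dist(f) = μ.withDensity f` (so `dist(f)(U) = ∫_U f dμ`), is measurable, where
`C(X, ℝ≥0)` carries the σ-algebra generated by the sets `{f | f x ≤ r}` and the space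
of measures carries the σ-algebra generated by the evaluation maps. -/
theorem stmt16 {X : Type*} [TopologicalSpace X] [TopologicalSpace.MetrizableSpace X]
    [SecondCountableTopology X] [mX : MeasurableSpace X] [BorelSpace X]
    (μ : Measure X) [SigmaFinite μ] :
    @Measurable C(X, ℝ≥0) (Measure X) (densitySigmaAlgebra X)
      MeasureTheory.Measure.instMeasurableSpace
      (fun f => μ.withDensity (fun x => (f x : ℝ≥0∞))) :=
  letI := densitySigmaAlgebra X
  measurable_withDensity_of_measurable_uncurry μ
    (measurable_coe_nnreal_ennreal.comp measurable_densitySigmaAlgebra_uncurry_eval)
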